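/- Under (A2), for all s > 0 and g ∈ L²(Π_X): ℰ_{Π_X}(P_X, g) ≤ s·ℰ_{Π_X}(P̄_X, g) + β(s)·‖g‖²_osc, where β(s) := ∫ β₂(s, y) Π_Y(dy). -/

import Mathlib

open MeasureTheory ENNReal

noncomputable section

/-- Oscillation seminorm, valued in `[0,∞]`. -/
def oscNorm {α : Type*} [MeasurableSpace α] (μ : Measure α) (f : α → ℝ) : ℝ≥0∞ :=
  essSup (fun p : α × α => ENNReal.ofReal |f p.1 - f p.2|) (μ.prod μ)

/-- The Dirichlet form of a kernel: `(1/2)∬ (f(x) − f(y))² k(x, dy) ν(dx)`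
(which equals `⟨(I − T)f, f⟩_ν` for the induced `ν`-invariant operator `T`). -/
def kernelDirichlet {α : Type*} [MeasurableSpace α]
    (ν : Measure α) (k : α → Measure α) (f : α → ℝ) : ℝ :=
  (1 / 2) * ∫ x, ∫ y, (f x - f y) ^ 2 ∂(k x) ∂ν

/-- Reversibility of a kernel `k` with respect to `ν`. -/
def KernelReversible {α : Type*} [MeasurableSpace α] (ν : Measure α) (k : α → Measure α) : Prop :=
  ∀ A B : Set α, MeasurableSet A → MeasurableSet B →
    ∫⁻ x in A, k x B ∂ν = ∫⁻ x in B, k x A ∂ν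

/-- Positivity of a kernel `k` with respect to `ν`. -/
def KernelPositive {α : Type*} [MeasurableSpace α] (ν : Measure α) (k : α → Measure α) : Prop :=
  ∀ f : α → ℝ, MemLp f 2 ν → 0 ≤ ∫ x, (∫ y, f y ∂(k x)) * f x ∂ν


/-! Disintegrating `Π` along both coordinates turns the Dirichlet energy of `P_X` into the
`Π_Y`-average of the fibre energies `2 Var_{Π_{X|Y}(·|y)}(g)`, and that of `P̄_X` into the
`Π_Y`-average of the Dirichlet energies of the `H_{2|y}`. The fibrewise weak Poincaré inequality
then integrates to the claim, because `‖g‖_osc` under almost every fibre `Π_{X|Y}(·|y)` is at most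
its oscillation under the mixture `Π_X = ∫ Π_{X|Y}(·|y) Π_Y(dy)`. -/

open ProbabilityTheory

section Energy

variable {α : Type*} [MeasurableSpace α]

/-- `2 * kernelDirichlet` as a lower integral, free of the junk values of the Bochner integral. -/
def kernelEnergy (ν : Measure α) (k : α → Measure α) (g : α → ℝ) : ℝ≥0∞ :=
  ∫⁻ x, ∫⁻ x', ENNReal.ofReal ((g x - g x') ^ 2) ∂k x ∂ν

lemma memLp_sub_comp_fst_snd_compProd {ν : Measure α} [SFinite ν] {k : Kernel α α}
    [IsMarkovKernel k] (hk : k.Invariant ν) {g : α → ℝ} (hg : MemLp g 2 ν) :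
    MemLp (fun p : α × α => g p.1 - g p.2) 2 (ν ⊗ₘ k) := by
  have hfst : MeasurePreserving Prod.fst (ν ⊗ₘ k) ν :=
    ⟨measurable_fst, Measure.fst_compProd ν k⟩
  have hsnd : MeasurePreserving Prod.snd (ν ⊗ₘ k) ν :=
    ⟨measurable_snd, (Measure.snd_compProd ν k).trans hk⟩
  exact (hg.comp_measurePreserving hfst).sub (hg.comp_measurePreserving hsnd)

lemma kernelEnergy_eq_lintegral_compProd (ν : Measure α) [SFinite ν] (k : Kernel α α)
    [IsSFiniteKernel k] {g : α → ℝ} (hg : Measurable g) :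
    kernelEnergy ν k g = ∫⁻ p, ENNReal.ofReal ((g p.1 - g p.2) ^ 2) ∂(ν ⊗ₘ k) :=
  (Measure.lintegral_compProd (f := fun p => ENNReal.ofReal ((g p.1 - g p.2) ^ 2))
    (by fun_prop)).symm

lemma kernelEnergy_eq_ofReal_two_mul_kernelDirichlet {ν : Measure α} [SFinite ν]
    {k : Kernel α α} [IsMarkovKernel k] (hk : k.Invariant ν) {g : α → ℝ} (hgm : Measurable g)
    (hg : MemLp g 2 ν) :
    kernelEnergy ν k g = ENNReal.ofReal (2 * kernelDirichlet ν k g) := by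
  have hint := (memLp_sub_comp_fst_snd_compProd hk hg).integrable_sq
  rw [kernelEnergy_eq_lintegral_compProd ν k hgm, kernelDirichlet, ← mul_assoc,
    mul_one_div_cancel two_ne_zero, one_mul, ← Measure.integral_compProd hint,
    ofReal_integral_eq_lintegral_ofReal hint (ae_of_all _ fun _ => sq_nonneg _)]

lemma variance_sub_comp_fst_snd_prod {μ : Measure α} [IsProbabilityMeasure μ] {g : α → ℝ}
    (hg : MemLp g 2 μ) :
    variance (fun p : α × α => g p.1 - g p.2) (μ.prod μ) = 2 * variance g μ := by
  have h := variance_add_prod (μ := μ) (ν := μ) hg hg.neg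
  simp only [Pi.neg_apply, ← sub_eq_add_neg, variance_neg] at h
  rw [h, two_mul]

lemma kernelEnergy_const_eq_ofReal_two_mul_variance (μ : Measure α) [IsProbabilityMeasure μ]
    {g : α → ℝ} (hgm : Measurable g) (hg : MemLp g 2 μ) :
    kernelEnergy μ (Kernel.const α μ) g = ENNReal.ofReal (2 * variance g μ) := by
  have hL2 : MemLp (fun p : α × α => g p.1 - g p.2) 2 (μ.prod μ) :=
    (hg.comp_fst μ).sub (hg.comp_snd μ)
  have hmean : ∫ p, g p.1 - g p.2 ∂(μ.prod μ) = 0 := by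
    rw [integral_sub ((hg.comp_fst μ).integrable one_le_two)
      ((hg.comp_snd μ).integrable one_le_two), integral_fun_fst, integral_fun_snd, sub_self]
  rw [kernelEnergy_eq_lintegral_compProd μ _ hgm, Measure.compProd_const,
    ← ofReal_integral_eq_lintegral_ofReal hL2.integrable_sq (ae_of_all _ fun _ => sq_nonneg _),
    ← variance_sub_comp_fst_snd_prod hg, variance_of_integral_eq_zero hL2.aemeasurable hmean]

lemma kernelDirichlet_congr_ae {ν : Measure α} {k : Kernel α α} (hk : k.Invariant ν)
    {f g : α → ℝ} (hfg : f =ᵐ[ν] g) : kernelDirichlet ν k f = kernelDirichlet ν k g := by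
  have hfg_fibre : ∀ᵐ x ∂ν, f =ᵐ[k x] g := Measure.ae_ae_of_ae_comp (hk.def.symm ▸ hfg)
  unfold kernelDirichlet
  congr 1
  refine integral_congr_ae ?_
  filter_upwards [hfg, hfg_fibre] with x hx hxk
  refine integral_congr_ae ?_
  filter_upwards [hxk] with x' hx'
  rw [hx, hx']

lemma kernelEnergy_const_le_of_variance_le {μ : Measure α} [IsProbabilityMeasure μ]
    {k : Kernel α α} [IsMarkovKernel k] (hk : k.Invariant μ) {g : α → ℝ} (hgm : Measurable g)
    (hg : MemLp g 2 μ) {s : ℝ} (hs : 0 ≤ s) {b : ℝ≥0∞}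
    (hvar : ENNReal.ofReal (variance g μ) ≤ ENNReal.ofReal (s * kernelDirichlet μ k g) + b) :
    kernelEnergy μ (Kernel.const α μ) g ≤ ENNReal.ofReal s * kernelEnergy μ k g + 2 * b := by
  rw [kernelEnergy_const_eq_ofReal_two_mul_variance μ hgm hg,
    kernelEnergy_eq_ofReal_two_mul_kernelDirichlet hk hgm hg, ← ENNReal.ofReal_mul hs,
    ENNReal.ofReal_mul zero_le_two, mul_left_comm, ENNReal.ofReal_mul zero_le_two,
    ENNReal.ofReal_ofNat, ← mul_add]
  gcongr

end Energy

section Oscillation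

variable {α : Type*} [MeasurableSpace α]

lemma oscNorm_congr_ae {μ : Measure α} [SFinite μ] {f g : α → ℝ} (hfg : f =ᵐ[μ] g) :
    oscNorm μ f = oscNorm μ g := by
  refine essSup_congr_ae ?_
  filter_upwards [Measure.quasiMeasurePreserving_fst.ae hfg,
    Measure.quasiMeasurePreserving_snd.ae hfg] with p h₁ h₂
  simp only [h₁, h₂]

lemma oscNorm_le_of_ae_mem {μ : Measure α} [SFinite μ] {g : α → ℝ} {G : Set α}
    (hG : ∀ᵐ x ∂μ, x ∈ G) {c : ℝ≥0∞}
    (hc : ∀ x ∈ G, ∀ x' ∈ G, ENNReal.ofReal |g x - g x'| ≤ c) : oscNorm μ g ≤ c := by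
  refine essSup_le_of_ae_le _ ?_
  filter_upwards [Measure.quasiMeasurePreserving_fst.ae hG,
    Measure.quasiMeasurePreserving_snd.ae hG] with p h₁ h₂
  exact hc _ h₁ _ h₂

lemma exists_ae_mem_forall_le_oscNorm (μ : Measure α) [SFinite μ] (g : α → ℝ) :
    ∃ G : Set α, (∀ᵐ x ∂μ, x ∈ G) ∧
      ∀ x ∈ G, ∀ x' ∈ G, ENNReal.ofReal |g x - g x'| ≤ oscNorm μ g := by
  by_cases htop : oscNorm μ g = ⊤
  · exact ⟨Set.univ, ae_of_all _ fun _ => trivial, fun _ _ _ _ => htop ▸ le_top⟩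
  -- with `m = essInf g`, a.e. `g ≤ m + ‖g‖_osc`; on `{m ≤ g ≤ m + ‖g‖_osc}` differences are bounded
  set o := (oscNorm μ g).toReal
  set m := essInf (fun x => (g x : EReal)) μ
  have hpair : ∀ᵐ x ∂μ, ∀ᵐ x' ∂μ, g x - g x' ≤ o := by
    filter_upwards [Measure.ae_ae_of_ae_prod (ENNReal.ae_le_essSup
      (fun p : α × α => ENNReal.ofReal |g p.1 - g p.2|) (μ := μ.prod μ))] with x hx
    filter_upwards [hx] with x' hx'
    exact (le_abs_self _).trans ((ENNReal.ofReal_le_iff_le_toReal htop).1 hx')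
  have hup : ∀ᵐ x ∂μ, (g x : EReal) ≤ m + o := by
    filter_upwards [hpair] with x hx
    have : ((g x - o : ℝ) : EReal) ≤ m :=
      le_essInf_of_ae_le _ (hx.mono fun x' h => EReal.coe_le_coe (by linarith))
    calc (g x : EReal) = ((g x - o : ℝ) : EReal) + o := by rw [← EReal.coe_add, sub_add_cancel]
      _ ≤ m + o := add_le_add_left this _
  refine ⟨{x | (g x : EReal) ≤ m + o ∧ m ≤ g x}, hup.and ae_essInf_le, ?_⟩
  have hsub : ∀ a b, (g a : EReal) ≤ m + o → m ≤ g b → g a - g b ≤ o := fun a b ha hb => by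
    have : (g a : EReal) ≤ ((g b + o : ℝ) : EReal) := by
      rw [EReal.coe_add]; exact ha.trans (add_le_add_left hb _)
    linarith [EReal.coe_le_coe_iff.1 this]
  rintro x ⟨hx, hx'⟩ y ⟨hy, hy'⟩
  rw [ENNReal.ofReal_le_iff_le_toReal htop, abs_sub_le_iff]
  exact ⟨hsub x y hx hy', hsub y x hy hx'⟩

end Oscillation

section Disintegration

variable {α β : Type*} [MeasurableSpace α] [MeasurableSpace β]

lemma ae_oscNorm_le_oscNorm_comp (μ : Measure β) [SFinite μ] (κ : Kernel β α)
    [IsSFiniteKernel κ] (g : α → ℝ) : ∀ᵐ b ∂μ, oscNorm (κ b) g ≤ oscNorm (κ ∘ₘ μ) g := by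
  obtain ⟨G, hG, hGosc⟩ := exists_ae_mem_forall_le_oscNorm (κ ∘ₘ μ) g
  filter_upwards [Measure.ae_ae_of_ae_comp hG] with b hb
  exact oscNorm_le_of_ae_mem hb hGosc

lemma ae_memLp_of_memLp_comp {μ : Measure β} {κ : Kernel β α} {g : α → ℝ} (hgm : Measurable g)
    (hg : MemLp g 2 (κ ∘ₘ μ)) : ∀ᵐ b ∂μ, MemLp g 2 (κ b) := by
  filter_upwards [Measure.ae_integrable_of_integrable_comp hg.integrable_sq] with b hb
  exact (memLp_two_iff_integrable_sq hgm.aestronglyMeasurable).2 hb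

lemma bind_map_eq_map_compProd {γ : Type*} [MeasurableSpace γ] (μ : Measure α) [SFinite μ]
    (κ : Kernel α β) [IsSFiniteKernel κ] {e : α → β → γ} (he : Measurable (Function.uncurry e)) :
    μ.bind (fun a => (κ a).map (e a)) = (μ ⊗ₘ κ).map (Function.uncurry e) := by
  rw [Measure.compProd_eq_comp_prod, Measure.map_comp _ _ he]
  congr 1
  ext1 a
  rw [Kernel.map_apply _ he, Kernel.prod_apply, Kernel.id_apply, Measure.dirac_prod,
    Measure.map_map he measurable_prodMk_left]
  rfl

lemma comp_id_prod_apply {γ : Type*} [MeasurableSpace γ] (H : Kernel (α × β) γ)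
    (κ : Kernel α β) [IsSFiniteKernel κ] (a : α) :
    (H ∘ₖ (Kernel.id ×ₖ κ)) a = (κ a).bind fun b => H (a, b) := by
  ext s hs
  rw [Kernel.comp_apply' _ _ _ hs, Kernel.prod_apply, Kernel.id_apply, Measure.dirac_prod,
    lintegral_map (Kernel.measurable_coe H hs) measurable_prodMk_left]
  exact (Measure.bind_apply hs (H.measurable.comp measurable_prodMk_left).aemeasurable).symm

end Disintegration

section TwoDisintegrations

variable {α β : Type*} [MeasurableSpace α] [MeasurableSpace β] {π : Measure (α × β)}
  [IsProbabilityMeasure π] {κ : Kernel α β} [IsMarkovKernel κ] {η : Kernel β α}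
  [IsMarkovKernel η]

lemma fst_eq_comp_snd (hη : π = (π.snd ⊗ₘ η).map Prod.swap) : π.fst = η ∘ₘ π.snd := by
  rw [← Measure.snd_compProd, ← Measure.fst_map_swap, ← hη]

lemma lintegral_lintegral_swap_of_disintegrations (hκ : π = π.fst ⊗ₘ κ)
    (hη : π = (π.snd ⊗ₘ η).map Prod.swap) {F : α × β → ℝ≥0∞} (hF : Measurable F) :
    ∫⁻ a, ∫⁻ b, F (a, b) ∂κ a ∂π.fst = ∫⁻ b, ∫⁻ a, F (a, b) ∂η b ∂π.snd := by
  calc ∫⁻ a, ∫⁻ b, F (a, b) ∂κ a ∂π.fst = ∫⁻ p, F p ∂π := by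
        rw [← Measure.lintegral_compProd hF, ← hκ]
    _ = ∫⁻ p, F p.swap ∂(π.snd ⊗ₘ η) := by
        conv_lhs => rw [hη]
        exact lintegral_map hF measurable_swap
    _ = ∫⁻ b, ∫⁻ a, F (a, b) ∂η b ∂π.snd := Measure.lintegral_compProd (hF.comp measurable_swap)

lemma lintegral_comp_id_prod (hκ : π = π.fst ⊗ₘ κ) (hη : π = (π.snd ⊗ₘ η).map Prod.swap)
    (H : Kernel (α × β) α) [IsSFiniteKernel H] {F : α × α → ℝ≥0∞} (hF : Measurable F) :
    ∫⁻ a, ∫⁻ a', F (a, a') ∂(H ∘ₖ (Kernel.id ×ₖ κ)) a ∂π.fst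
      = ∫⁻ b, ∫⁻ a, ∫⁻ a', F (a, a') ∂H (a, b) ∂η b ∂π.snd := by
  have hinner : Measurable fun p : α × β => ∫⁻ a', F (p.1, a') ∂H p :=
    (hF.comp (measurable_fst.prodMap measurable_id)).lintegral_kernel_prod_right'
  calc _ = ∫⁻ a, ∫⁻ b, ∫⁻ a', F (a, a') ∂H (a, b) ∂κ a ∂π.fst := by
        refine lintegral_congr fun a => ?_
        rw [comp_id_prod_apply]
        exact Measure.lintegral_bind (H.measurable.comp measurable_prodMk_left).aemeasurable
          (hF.comp measurable_prodMk_left).aemeasurable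
    _ = _ := lintegral_lintegral_swap_of_disintegrations hκ hη hinner

lemma invariant_comp_id_prod (hκ : π = π.fst ⊗ₘ κ) (hη : π = (π.snd ⊗ₘ η).map Prod.swap)
    (H : Kernel (α × β) α) [IsMarkovKernel H] (hH : ∀ b, (H.sectL b).Invariant (η b)) :
    (H ∘ₖ (Kernel.id ×ₖ κ)).Invariant π.fst := by
  ext s hs
  have h := lintegral_comp_id_prod hκ hη H
    (F := fun p => s.indicator 1 p.2) ((measurable_const.indicator hs).comp measurable_snd)
  simp only [lintegral_indicator_one hs] at h
  have hHs : ∀ b, ∫⁻ a, H (a, b) s ∂η b = η b s := fun b =>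
    (Measure.bind_apply hs (H.sectL b).aemeasurable).symm.trans (by rw [(hH b).def])
  rw [Measure.bind_apply hs (Kernel.aemeasurable _), h, fst_eq_comp_snd hη,
    Measure.bind_apply hs η.aemeasurable]
  exact lintegral_congr fun b => hHs b

lemma invariant_prodMkLeft_comp_id_prod (hκ : π = π.fst ⊗ₘ κ)
    (hη : π = (π.snd ⊗ₘ η).map Prod.swap) :
    (Kernel.prodMkLeft α η ∘ₖ (Kernel.id ×ₖ κ)).Invariant π.fst :=
  invariant_comp_id_prod hκ hη _ fun b => by
    show (η b).bind (fun _ => η b) = η b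
    rw [Measure.bind_const, measure_univ, one_smul]

lemma kernelEnergy_comp_id_prod (hκ : π = π.fst ⊗ₘ κ) (hη : π = (π.snd ⊗ₘ η).map Prod.swap)
    (H : Kernel (α × β) α) [IsSFiniteKernel H] {g : α → ℝ} (hg : Measurable g) :
    kernelEnergy π.fst (H ∘ₖ (Kernel.id ×ₖ κ)) g
      = ∫⁻ b, kernelEnergy (η b) (H.sectL b) g ∂π.snd :=
  lintegral_comp_id_prod hκ hη H (F := fun p => ENNReal.ofReal ((g p.1 - g p.2) ^ 2))
    (by fun_prop)

lemma ofReal_kernelDirichlet_comp_id_prod_le_of_measurable (hκ : π = π.fst ⊗ₘ κ)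
    (hη : π = (π.snd ⊗ₘ η).map Prod.swap) (H : Kernel (α × β) α) [IsMarkovKernel H]
    (hH : ∀ b, (H.sectL b).Invariant (η b)) {s : ℝ} (hs : 0 ≤ s) {w : β → ℝ} (hw0 : 0 ≤ w)
    (hw : Integrable w π.snd) {g : α → ℝ} (hgm : Measurable g) (hg : MemLp g 2 π.fst)
    (hwpi : ∀ b, MemLp g 2 (η b) → ENNReal.ofReal (variance g (η b)) ≤
      ENNReal.ofReal (s * kernelDirichlet (η b) (H.sectL b) g) +
        ENNReal.ofReal (w b) * oscNorm (η b) g ^ 2) :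
    ENNReal.ofReal (kernelDirichlet π.fst (Kernel.prodMkLeft α η ∘ₖ (Kernel.id ×ₖ κ)) g) ≤
      ENNReal.ofReal (s * kernelDirichlet π.fst (H ∘ₖ (Kernel.id ×ₖ κ)) g) +
        ENNReal.ofReal (∫ b, w b ∂π.snd) * oscNorm π.fst g ^ 2 := by
  have hmarg := fst_eq_comp_snd hη
  have hP := invariant_prodMkLeft_comp_id_prod hκ hη
  have hPb := invariant_comp_id_prod hκ hη H hH
  have hfiber : ∀ᵐ b ∂π.snd, kernelEnergy (η b) (Kernel.const α (η b)) g ≤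
      ENNReal.ofReal s * kernelEnergy (η b) (H.sectL b) g +
        2 * (ENNReal.ofReal (w b) * oscNorm π.fst g ^ 2) := by
    have hosc : ∀ᵐ b ∂π.snd, oscNorm (η b) g ≤ oscNorm π.fst g := by
      rw [hmarg]; exact ae_oscNorm_le_oscNorm_comp π.snd η g
    filter_upwards [ae_memLp_of_memLp_comp hgm (hmarg ▸ hg), hosc] with b hb hbO
    refine (kernelEnergy_const_le_of_variance_le (hH b) hgm hb hs (hwpi b hb)).trans ?_
    gcongr
  have hwint : ∫⁻ b, ENNReal.ofReal (w b) ∂π.snd = ENNReal.ofReal (∫ b, w b ∂π.snd) :=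
    (ofReal_integral_eq_lintegral_ofReal hw (ae_of_all _ hw0)).symm
  refine (ENNReal.mul_le_mul_iff_right two_ne_zero ofNat_ne_top).1 ?_
  calc 2 * ENNReal.ofReal (kernelDirichlet π.fst (Kernel.prodMkLeft α η ∘ₖ (Kernel.id ×ₖ κ)) g)
      = ∫⁻ b, kernelEnergy (η b) (Kernel.const α (η b)) g ∂π.snd := by
        rw [← ENNReal.ofReal_ofNat, ← ENNReal.ofReal_mul zero_le_two,
          ← kernelEnergy_eq_ofReal_two_mul_kernelDirichlet hP hgm hg,
          kernelEnergy_comp_id_prod hκ hη _ hgm]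
        rfl
    _ ≤ ∫⁻ b, ENNReal.ofReal s * kernelEnergy (η b) (H.sectL b) g +
          2 * (ENNReal.ofReal (w b) * oscNorm π.fst g ^ 2) ∂π.snd := lintegral_mono_ae hfiber
    _ = ENNReal.ofReal s * kernelEnergy π.fst (H ∘ₖ (Kernel.id ×ₖ κ)) g +
          2 * (ENNReal.ofReal (∫ b, w b ∂π.snd) * oscNorm π.fst g ^ 2) := by
        rw [lintegral_add_right' _ ((hw.aemeasurable.ennreal_ofReal.mul_const _).const_mul 2),
          lintegral_const_mul' _ _ ofReal_ne_top, lintegral_const_mul'' _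
            (hw.aemeasurable.ennreal_ofReal.mul_const _),
          lintegral_mul_const'' _ hw.aemeasurable.ennreal_ofReal, hwint,
          kernelEnergy_comp_id_prod hκ hη H hgm]
    _ = _ := by
        rw [kernelEnergy_eq_ofReal_two_mul_kernelDirichlet hPb hgm hg,
          ENNReal.ofReal_mul zero_le_two, ENNReal.ofReal_mul hs, ENNReal.ofReal_ofNat]
        ring

theorem ofReal_kernelDirichlet_comp_id_prod_le (hκ : π = π.fst ⊗ₘ κ)
    (hη : π = (π.snd ⊗ₘ η).map Prod.swap) (H : Kernel (α × β) α) [IsMarkovKernel H]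
    (hH : ∀ b, (H.sectL b).Invariant (η b)) {s : ℝ} (hs : 0 ≤ s) {w : β → ℝ} (hw0 : 0 ≤ w)
    (hw : Integrable w π.snd)
    (hwpi : ∀ b, ∀ g : α → ℝ, MemLp g 2 (η b) → ENNReal.ofReal (variance g (η b)) ≤
      ENNReal.ofReal (s * kernelDirichlet (η b) (H.sectL b) g) +
        ENNReal.ofReal (w b) * oscNorm (η b) g ^ 2)
    {g : α → ℝ} (hg : MemLp g 2 π.fst) :
    ENNReal.ofReal (kernelDirichlet π.fst (Kernel.prodMkLeft α η ∘ₖ (Kernel.id ×ₖ κ)) g) ≤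
      ENNReal.ofReal (s * kernelDirichlet π.fst (H ∘ₖ (Kernel.id ×ₖ κ)) g) +
        ENNReal.ofReal (∫ b, w b ∂π.snd) * oscNorm π.fst g ^ 2 := by
  obtain ⟨g', hg'm, hgg'⟩ := hg.aestronglyMeasurable
  rw [kernelDirichlet_congr_ae (invariant_prodMkLeft_comp_id_prod hκ hη) hgg',
    kernelDirichlet_congr_ae (invariant_comp_id_prod hκ hη H hH) hgg', oscNorm_congr_ae hgg']
  exact ofReal_kernelDirichlet_comp_id_prod_le_of_measurable hκ hη H hH hs hw0 hw
    hg'm.measurable (hg.ae_eq hgg') fun b => hwpi b g'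

end TwoDisintegrations

variable {X Y : Type*} [MeasurableSpace X] [MeasurableSpace Y]

theorem stmt16_general
    (π : Measure (X × Y)) [IsProbabilityMeasure π]
    (κ : X → Measure Y) (hκmeas : Measurable κ) (hκprob : ∀ x, IsProbabilityMeasure (κ x))
    (η : Y → Measure X) (hηmeas : Measurable η) (hηprob : ∀ y, IsProbabilityMeasure (η y))
    (hκdis : π = (π.fst).bind (fun x => (κ x).map (fun y => (x, y))))
    (hηdis : π = (π.snd).bind (fun y => (η y).map (fun x => (x, y))))
    (KH₂ : X × Y → Measure X) (hKH₂meas : Measurable KH₂)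
    (hKH₂prob : ∀ p, IsProbabilityMeasure (KH₂ p))
    -- Assumption (A2)
    (β₂ : ℝ → Y → ℝ) (hβ₂meas : ∀ s, Measurable (β₂ s))
    (hβ₂range : ∀ y, ∀ s, 0 < s → β₂ s y ∈ Set.Icc (0 : ℝ) (1 / 4))
    (hH₂rev : ∀ y, KernelReversible (η y) (fun x => KH₂ (x, y)))
    (hH₂wpi : ∀ y, ∀ s : ℝ, 0 < s → ∀ g : X → ℝ, MemLp g 2 (η y) →
      ENNReal.ofReal (ProbabilityTheory.variance g (η y)) ≤
        ENNReal.ofReal (s * kernelDirichlet (η y) (fun x => KH₂ (x, y)) g) +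
          ENNReal.ofReal (β₂ s y) * (oscNorm (η y) g) ^ 2) :
    ∀ s : ℝ, 0 < s → ∀ g : X → ℝ, MemLp g 2 π.fst →
      ENNReal.ofReal (kernelDirichlet π.fst (fun x => (κ x).bind η) g) ≤
        ENNReal.ofReal
            (s * kernelDirichlet π.fst (fun x => (κ x).bind (fun y => KH₂ (x, y))) g) +
          ENNReal.ofReal (∫ y, β₂ s y ∂π.snd) * (oscNorm π.fst g) ^ 2 := by
  intro s hs g hg
  let K : Kernel X Y := ⟨κ, hκmeas⟩
  let E : Kernel Y X := ⟨η, hηmeas⟩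
  let H : Kernel (X × Y) X := ⟨KH₂, hKH₂meas⟩
  have : IsMarkovKernel K := ⟨hκprob⟩
  have : IsMarkovKernel E := ⟨hηprob⟩
  have : IsMarkovKernel H := ⟨hKH₂prob⟩
  have hK : π = π.fst ⊗ₘ K :=
    hκdis.trans ((bind_map_eq_map_compProd (e := Prod.mk) _ K measurable_id).trans Measure.map_id)
  have hE : π = (π.snd ⊗ₘ E).map Prod.swap :=
    hηdis.trans (bind_map_eq_map_compProd _ E measurable_swap)
  have hP : (fun x => (κ x).bind η) = ⇑(Kernel.prodMkLeft X E ∘ₖ (Kernel.id ×ₖ K)) :=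
    funext fun x => by rw [comp_id_prod_apply]; rfl
  have hPb : (fun x => (κ x).bind fun y => KH₂ (x, y)) = ⇑(H ∘ₖ (Kernel.id ×ₖ K)) :=
    funext fun x => (comp_id_prod_apply H K x).symm
  rw [hP, hPb]
  exact ofReal_kernelDirichlet_comp_id_prod_le hK hE H
    (fun y => Kernel.IsReversible.invariant fun A B hA hB => hH₂rev y A B hA hB) hs.le
    (fun y => (hβ₂range y s hs).1)
    (.of_mem_Icc 0 (1 / 4) (hβ₂meas s).aemeasurable (ae_of_all _ fun y => hβ₂range y s hs))
    (fun y => hH₂wpi y s hs) hg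

/-- under (A2), `ℰ_{Π_X}(P_X, g) ≤ s·ℰ_{Π_X}(P̄_X, g) + β(s)·‖g‖²_osc`
with `β(s) = ∫ β₂(s, y) Π_Y(dy)`. -/
theorem stmt16
    (π : Measure (X × Y)) [IsProbabilityMeasure π]
    (κ : X → Measure Y) (hκmeas : Measurable κ) (hκprob : ∀ x, IsProbabilityMeasure (κ x))
    (η : Y → Measure X) (hηmeas : Measurable η) (hηprob : ∀ y, IsProbabilityMeasure (η y))
    (hκdis : π = (π.fst).bind (fun x => (κ x).map (fun y => (x, y))))
    (hηdis : π = (π.snd).bind (fun y => (η y).map (fun x => (x, y))))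
    (KH₂ : X × Y → Measure X) (hKH₂meas : Measurable KH₂)
    (hKH₂prob : ∀ p, IsProbabilityMeasure (KH₂ p))
    -- Assumption (A2)
    (β₂ : ℝ → Y → ℝ) (hβ₂meas : ∀ s, Measurable (β₂ s))
    (hβ₂range : ∀ y, ∀ s, 0 < s → β₂ s y ∈ Set.Icc (0 : ℝ) (1 / 4))
    (hβ₂anti : ∀ y, AntitoneOn (fun s => β₂ s y) (Set.Ioi (0 : ℝ)))
    (hβ₂lim : ∀ y, Filter.Tendsto (fun s => β₂ s y) Filter.atTop (nhds 0))
    (hH₂rev : ∀ y, KernelReversible (η y) (fun x => KH₂ (x, y)))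
    (hH₂pos : ∀ y, KernelPositive (η y) (fun x => KH₂ (x, y)))
    (hH₂wpi : ∀ y, ∀ s : ℝ, 0 < s → ∀ g : X → ℝ, MemLp g 2 (η y) →
      ENNReal.ofReal (ProbabilityTheory.variance g (η y)) ≤
        ENNReal.ofReal (s * kernelDirichlet (η y) (fun x => KH₂ (x, y)) g) +
          ENNReal.ofReal (β₂ s y) * (oscNorm (η y) g) ^ 2) :
    ∀ s : ℝ, 0 < s → ∀ g : X → ℝ, MemLp g 2 π.fst →
      ENNReal.ofReal (kernelDirichlet π.fst (fun x => (κ x).bind η) g) ≤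
        ENNReal.ofReal
            (s * kernelDirichlet π.fst (fun x => (κ x).bind (fun y => KH₂ (x, y))) g) +
          ENNReal.ofReal (∫ y, β₂ s y ∂π.snd) * (oscNorm π.fst g) ^ 2 :=
  stmt16_general π κ hκmeas hκprob η hηmeas hηprob hκdis hηdis KH₂ hKH₂meas hKH₂prob β₂ hβ₂meas
    hβ₂range hH₂rev hH₂wpi

end
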